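/- arXiv:2109.05284 — 3 statements merged into one kernel-verified Lean document; each statement's English description precedes it below -/
import Mathlib

section
/- Junction tree theorem: Let J be a tree decomposition of a finite graph G. For each bag U of J let D_U be a probability distribution over {0,1}^U. Suppose that for every edge (U,V) of J, the marginals of D_U and D_V on {0,1}^{U∩V} coincide. Then there exists a probability distribution D over {0,1}^G such that for every bag U, the marginal of D on {0,1}^U equals D_U. -/
/-!
Remove a leaf `ℓ` of the tree, with neighbour `p`, and take by induction a joint distribution
for the remaining bags. By the running intersection property, every variable that `bag ℓ`
shares with another bag lies in `bag p`, and the two distributions agree on the marginal over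
`bag ℓ ∩ bag p`. Sampling the remaining variables and then the variables of `bag ℓ` from `D ℓ`
conditioned on the values already fixed on `bag ℓ ∩ bag p` therefore yields the required
distribution.
-/

namespace PMF

variable {α β γ : Type*}

/-- The conditional distribution of `p` on the fibre `f ⁻¹' {c}`; it is the junk value `p`
when that fibre is `p`-null. -/
noncomputable def condFiber (p : PMF α) (f : α → γ) (c : γ) : PMF α :=
  open Classical in
  if h : ∃ a ∈ f ⁻¹' {c}, a ∈ p.support then p.filter _ h else p

theorem support_condFiber_subset (p : PMF α) (f : α → γ) (c : γ) :
    (p.condFiber f c).support ⊆ p.support := by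
  unfold condFiber
  split_ifs
  · exact fun a ha => ((mem_support_filter_iff _).1 ha).2
  · exact subset_rfl

theorem apply_eq_of_mem_support_condFiber {p : PMF α} {f : α → γ} {c : γ} {a : α}
    (hc : c ∈ (p.map f).support) (ha : a ∈ (p.condFiber f c).support) : f a = c := by
  obtain ⟨x, hx, rfl⟩ := (mem_support_map_iff _ _ _).1 hc
  rw [condFiber, dif_pos ⟨x, rfl, hx⟩, mem_support_filter_iff] at ha
  exact ha.1

theorem bind_condFiber (p : PMF α) (f : α → γ) : (p.map f).bind (p.condFiber f) = p := by
  ext a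
  rw [bind_apply, tsum_eq_single (f a)]
  · by_cases ha : a ∈ p.support
    · have hfibre : ∑' x, (f ⁻¹' {f a}).indicator p x = p.map f (f a) := by
        rw [← toOuterMeasure_apply, ← toOuterMeasure_map_apply, toOuterMeasure_apply_singleton]
      have hne : p.map f (f a) ≠ 0 := (mem_support_map_iff _ _ _).2 ⟨a, ha, rfl⟩
      rw [condFiber, dif_pos ⟨a, rfl, ha⟩, filter_apply, hfibre,
        Set.indicator_of_mem (s := f ⁻¹' {f a}) rfl, mul_left_comm,
        ENNReal.mul_inv_cancel hne (apply_ne_top _ _), mul_one]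
    · have h0 : p.condFiber f (f a) a = 0 :=
        by_contra fun h => ha (support_condFiber_subset p f _ h)
      rw [h0, mul_zero, (apply_eq_zero_iff p a).2 ha]
  · intro c hc
    by_cases hmap : c ∈ (p.map f).support
    · rw [(apply_eq_zero_iff _ a).2 fun ha => hc (apply_eq_of_mem_support_condFiber hmap ha).symm,
        mul_zero]
    · rw [(apply_eq_zero_iff _ c).2 hmap, zero_mul]

theorem map_congr_of_eqOn_support {p : PMF α} {f g : α → β} (h : Set.EqOn f g p.support) :
    p.map f = p.map g := by
  ext b
  refine tsum_congr fun a => ?_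
  by_cases ha : a ∈ p.support
  · simp only [Function.comp_apply, h ha]
  · simp [(apply_eq_zero_iff p a).2 ha]

theorem exists_coupling_of_map_eq (μ : PMF α) (ν : PMF β) (f : α → γ) (g : β → γ)
    (h : μ.map f = ν.map g) :
    ∃ π : PMF (α × β), π.map Prod.fst = μ ∧ π.map Prod.snd = ν ∧
      ∀ z ∈ π.support, f z.1 = g z.2 := by
  refine ⟨μ.bind fun a => (ν.condFiber g (f a)).map (Prod.mk a), ?_, ?_, ?_⟩
  · simp_rw [map_bind, map_comp]
    exact (congrArg μ.bind (funext fun a => map_const _ a)).trans (bind_pure μ)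
  · simp_rw [map_bind, map_comp, Prod.snd_comp_mk, map_id]
    rw [← Function.comp_def, ← bind_map, h, bind_condFiber]
  · intro z hz
    obtain ⟨a, ha, hz⟩ := (mem_support_bind_iff _ _ _).1 hz
    obtain ⟨b, hb, rfl⟩ := (mem_support_map_iff _ _ _).1 hz
    have hfa : f a ∈ (ν.map g).support := h ▸ (mem_support_map_iff _ _ _).2 ⟨a, ha, rfl⟩
    exact (apply_eq_of_mem_support_condFiber hfa hb).symm

theorem exists_glue {V : Type*} [DecidableEq V] (μ : PMF (V → β)) {U S : Finset V}
    (ν : PMF (U → β)) (hSU : S ⊆ U)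
    (h : μ.map S.restrict = ν.map (Finset.restrict₂ (π := fun _ => β) hSU)) :
    ∃ μ' : PMF (V → β), μ'.map U.restrict = ν ∧
      ∀ W : Finset V, W ∩ U ⊆ S → μ'.map W.restrict = μ.map W.restrict := by
  obtain ⟨π, hπμ, hπν, hπ⟩ := exists_coupling_of_map_eq μ ν _ _ h
  refine ⟨π.map fun z => Function.updateFinset z.1 U z.2, ?_, fun W hW => ?_⟩
  · rw [map_comp, ← hπν]
    exact congrArg (π.map ·) (funext fun z => Function.restrict_updateFinset z.1 z.2)
  · rw [map_comp, ← hπμ, map_comp]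
    refine map_congr_of_eqOn_support fun z hz => funext fun v => ?_
    simp only [Function.comp_apply, Finset.restrict, Function.updateFinset]
    split_ifs with hvU
    · exact (congrFun (hπ z hz) ⟨v, hW (Finset.mem_inter.2 ⟨v.2, hvU⟩)⟩).symm
    · rfl

end PMF

open SimpleGraph

section RunningIntersection

variable {ι V : Type*} {T : SimpleGraph ι} {bag : ι → Finset V}

def RunningIntersection (T : SimpleGraph ι) (bag : ι → Finset V) : Prop :=
  ∀ ⦃i j : ι⦄ (P : T.Walk i j), P.IsPath → ∀ v ∈ bag i, v ∈ bag j → ∀ k ∈ P.support, v ∈ bag k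

theorem SimpleGraph.IsAcyclic.runningIntersection (hT : T.IsAcyclic)
    (h : ∀ v, (T.induce {i | v ∈ bag i}).Preconnected) : RunningIntersection T bag := by
  classical
  intro i j P hP v hi hj k hk
  obtain ⟨w⟩ := h v ⟨i, hi⟩ ⟨j, hj⟩
  set W := w.map (Embedding.induce _).toHom
  have hPW : P = W.bypass :=
    congrArg Subtype.val ((hT.subsingleton_path i j).elim ⟨P, hP⟩ ⟨_, W.bypass_isPath⟩)
  have hkW : k ∈ W.support := W.support_bypass_subset_support (hPW ▸ hk)
  rw [Walk.support_map, List.mem_map] at hkW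
  obtain ⟨k', -, rfl⟩ := hkW
  exact k'.2

theorem RunningIntersection.induce (h : RunningIntersection T bag) (s : Set ι) :
    RunningIntersection (T.induce s) (fun i => bag i) := by
  intro i j P hP v hi hj k hk
  exact h (P.map (Embedding.induce s).toHom) (hP.map Subtype.val_injective) v hi hj k
    (by rw [Walk.support_map]; exact List.mem_map_of_mem hk)

theorem RunningIntersection.inter_subset_of_forall_adj_eq [DecidableEq V]
    (h : RunningIntersection T bag) (hT : T.Connected) {ℓ p : ι} (hℓ : ∀ j, T.Adj ℓ j → j = p)
    {i : ι} (hi : i ≠ ℓ) :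
    bag i ∩ bag ℓ ⊆ bag p := by
  intro v hv
  obtain ⟨P, hP⟩ := hT.exists_isPath i ℓ
  rw [← hℓ _ (P.adj_penultimate (Walk.not_nil_of_ne hi)).symm]
  exact h P hP v (Finset.mem_inter.1 hv).1 (Finset.mem_inter.1 hv).2 _ (P.getVert_mem_support _)

end RunningIntersection

theorem SimpleGraph.IsTree.exists_pmf_map_restrict_eq {ι V β : Type*} [Finite ι] [DecidableEq V]
    [Nonempty β] {T : SimpleGraph ι} {bag : ι → Finset V} (hT : T.IsTree)
    (hbag : RunningIntersection T bag) (D : ∀ i, PMF (bag i → β))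
    (hD : ∀ i j, T.Adj i j →
      (D i).map (Finset.restrict₂ (π := fun _ => β) Finset.inter_subset_left) =
      (D j).map (Finset.restrict₂ (π := fun _ => β) Finset.inter_subset_right)) :
    ∃ μ : PMF (V → β), ∀ i, μ.map (bag i).restrict = D i := by
  induction ι using Finite.induction_subsingleton_or_nontrivial with
  | hbase ι =>
    obtain ⟨r⟩ := hT.connected.nonempty
    obtain ⟨b⟩ := ‹Nonempty β›
    refine ⟨(D r).map (Function.updateFinset (fun _ => b) (bag r)), fun i => ?_⟩
    rw [Subsingleton.elim i r, PMF.map_comp]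
    exact (congrArg (D r).map (funext (Function.restrict_updateFinset fun _ => b))).trans
      (PMF.map_id _)
  | hstep ι ih =>
    classical
    have := Fintype.ofFinite ι
    obtain ⟨ℓ, hℓ⟩ := hT.exists_vert_degree_one_of_nontrivial
    obtain ⟨p, hℓp, hp⟩ := degree_eq_one_iff_existsUnique_adj.1 hℓ
    obtain ⟨μ, hμ⟩ := ih ({ℓ}ᶜ : Set ι) (Finite.card_subtype_lt (not_not.2 rfl))
      ⟨hT.connected.induce_compl_singleton_of_degree_eq_one hℓ, hT.isAcyclic.induce _⟩
      (hbag.induce _) (fun i => D i) (fun i j hij => hD i j hij)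
    have hsep : ∀ i ≠ ℓ, bag i ∩ bag ℓ ⊆ bag ℓ ∩ bag p := fun i hi =>
      Finset.subset_inter Finset.inter_subset_right
        (hbag.inter_subset_of_forall_adj_eq hT.connected hp hi)
    obtain ⟨μ', hμ'ℓ, hμ'⟩ := PMF.exists_glue μ (D ℓ) Finset.inter_subset_left <| by
      rw [← Finset.restrict₂_comp_restrict Finset.inter_subset_right, ← PMF.map_comp,
        hμ ⟨p, hℓp.ne'⟩, hD ℓ p hℓp]
    refine ⟨μ', fun i => ?_⟩
    by_cases hi : i = ℓ
    · exact hi ▸ hμ'ℓ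
    · rw [hμ' _ (hsep i hi)]
      exact hμ ⟨i, hi⟩

theorem stmt1_general {V ι : Type} [DecidableEq V] [Fintype ι]
    (T : SimpleGraph ι) (bag : ι → Finset V)
    (htree : T.IsTree)
    (hconn : ∀ u : V, (∃ i, u ∈ bag i) ∧ (T.induce {i | u ∈ bag i}).Connected)
    (D : (i : ι) → PMF ({v : V // v ∈ bag i} → Bool))
    (hagree : ∀ i j, T.Adj i j →
      (D i).map (fun f (v : {v : V // v ∈ bag i ∩ bag j}) =>
          f ⟨v.1, (Finset.mem_inter.mp v.2).1⟩) =
      (D j).map (fun f (v : {v : V // v ∈ bag i ∩ bag j}) =>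
          f ⟨v.1, (Finset.mem_inter.mp v.2).2⟩)) :
    ∃ D' : PMF (V → Bool),
      ∀ i : ι, D'.map (fun x (v : {v : V // v ∈ bag i}) => x v.1) = D i :=
  htree.exists_pmf_map_restrict_eq
    (htree.isAcyclic.runningIntersection fun u => (hconn u).2.preconnected) D hagree

/-- Junction tree theorem. Let `T` (on finite index type `ι`) be a tree
decomposition of the finite vertex set `V` (with bags `bag i`, every vertex lying in a
nonempty connected set of bags). Given, for each bag, a distribution `D i` over
`{0,1}^{bag i}` such that adjacent bags agree on the marginal over their intersection,
there is a distribution `D` over `{0,1}^V` whose marginal on every bag `i` is `D i`. -/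
theorem stmt1 {V ι : Type} [Fintype V] [DecidableEq V] [Fintype ι]
    (T : SimpleGraph ι) (bag : ι → Finset V)
    (htree : T.IsTree)
    (hconn : ∀ u : V, (∃ i, u ∈ bag i) ∧ (T.induce {i | u ∈ bag i}).Connected)
    (D : (i : ι) → PMF ({v : V // v ∈ bag i} → Bool))
    (hagree : ∀ i j, T.Adj i j →
      (D i).map (fun f (v : {v : V // v ∈ bag i ∩ bag j}) =>
          f ⟨v.1, (Finset.mem_inter.mp v.2).1⟩) =
      (D j).map (fun f (v : {v : V // v ∈ bag i ∩ bag j}) =>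
          f ⟨v.1, (Finset.mem_inter.mp v.2).2⟩)) :
    ∃ D' : PMF (V → Bool),
      ∀ i : ι, D'.map (fun x (v : {v : V // v ∈ bag i}) => x v.1) = D i :=
  stmt1_general T bag htree hconn D hagree
end

section
/- The graph J whose vertices are the bags C = C⁻ ∪ C⁺ (where C⁻ is a public node and C⁺ the set of all children of nodes in C⁻), with an edge between C₁ and C₂ whenever one contains a parent of a node of the other, is a tree. -/
/-- Ancestor relation generated by a parent map. -/
def anc {H : Type*} (par : H → Option H) : H → H → Prop :=
  Relation.ReflTransGen (fun g h => par h = some g)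

/-- `h ⪯ I` : `h` has a descendant in `I`. -/
def precedesSet {H : Type*} (par : H → Option H) (h : H) (I : Set H) : Prop :=
  ∃ g ∈ I, anc par h g

/-- The relation `∼` on nodes of the game tree. -/
def simRel {H : Type*} (par : H → Option H) (depth : H → ℕ)
    (infosets : Set (Set H)) (h₁ h₂ : H) : Prop :=
  depth h₁ = depth h₂ ∧ ∃ I ∈ infosets, precedesSet par h₁ I ∧ precedesSet par h₂ I

/-- The setoid of public nodes: equivalence classes of the closure of `∼`. -/
def pubSetoid {H : Type*} (par : H → Option H) (depth : H → ℕ)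
    (infosets : Set (Set H)) : Setoid H :=
  ⟨Relation.EqvGen (simRel par depth infosets),
   Relation.EqvGen.is_equivalence _⟩

/-- The graph on public nodes (equivalence classes): `C₁` and `C₂` are adjacent iff one
contains a parent of a node of the other (equivalently, on the level of bags
`C = C⁻ ∪ C⁺`, one bag contains a parent of a node of the other). -/
def publicGraph {H : Type*} (par : H → Option H) (depth : H → ℕ)
    (infosets : Set (Set H)) :
    SimpleGraph (Quotient (pubSetoid par depth infosets)) :=
  SimpleGraph.fromRel (fun q₁ q₂ => ∃ h g : H, par h = some g ∧
    Quotient.mk (pubSetoid par depth infosets) g = q₁ ∧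
    Quotient.mk (pubSetoid par depth infosets) h = q₂)

/-!
Depth is constant on public nodes, and the parents of the nodes of a public node again form
part of a single public node. Hence the public nodes, ordered by "contains a parent of", form a
rooted forest graded by depth: every public node of positive depth has exactly one parent
public node, and the root is the only public node of depth 0. A graph of this shape is a tree:
it is connected by walking up to the root, and a cycle would have to enter and leave a vertex of
maximal depth through that vertex's unique parent.
-/

namespace SimpleGraph

section Graded

variable {V : Type*} {r : V → V → Prop} {f : V → ℕ}

lemma fromRel_adj_of_rank_succ (hf : ∀ u v, r u v → f v = f u + 1) {u v : V} (huv : r u v) :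
    (fromRel r).Adj u v :=
  (fromRel_adj r u v).mpr ⟨fun h => by have := hf u v huv; subst h; omega, Or.inl huv⟩

lemma rel_of_fromRel_adj_of_rank_le (hf : ∀ u v, r u v → f v = f u + 1) {u v : V}
    (hadj : (fromRel r).Adj u v) (hle : f v ≤ f u) : r v u := by
  rcases ((fromRel_adj r u v).mp hadj).2 with huv | hvu
  · have := hf u v huv; omega
  · exact hvu

theorem connected_fromRel_of_rank_succ (hf : ∀ u v, r u v → f v = f u + 1) (v₀ : V)
    (h₀ : ∀ v, f v = 0 → v = v₀) (hpred : ∀ v, 0 < f v → ∃ u, r u v) :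
    (fromRel r).Connected := by
  have hreach : ∀ n v, f v = n → (fromRel r).Reachable v v₀ := by
    intro n
    induction n with
    | zero => intro v hv; rw [h₀ v hv]
    | succ n ih =>
      intro v hv
      obtain ⟨u, huv⟩ := hpred v (by omega)
      exact (fromRel_adj_of_rank_succ hf huv).symm.reachable.trans
        (ih u (by have := hf u v huv; omega))
  have : Nonempty V := ⟨v₀⟩
  exact ⟨fun u v => (hreach _ u rfl).trans (hreach _ v rfl).symm⟩

theorem isAcyclic_fromRel_of_rank_succ (hf : ∀ u v, r u v → f v = f u + 1)
    (huniq : ∀ u₁ u₂ v, r u₁ v → r u₂ v → u₁ = u₂) : (fromRel r).IsAcyclic := by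
  classical
  intro v c hc
  obtain ⟨x, hx, hmax⟩ := c.support.toFinset.exists_max_image f
    ⟨v, List.mem_toFinset.mpr c.start_mem_support⟩
  rw [List.mem_toFinset] at hx
  set c' := c.rotate x hx
  have hc' : c'.IsCycle := hc.rotate hx
  have hmax' : ∀ y ∈ c'.support, f y ≤ f x := fun y hy =>
    hmax y (List.mem_toFinset.mpr ((c.mem_support_rotate_iff x hx).mp hy))
  have hnil : ¬c'.Nil := hc'.not_nil
  exact hc'.snd_ne_penultimate <| huniq _ _ x
    (rel_of_fromRel_adj_of_rank_le hf (c'.adj_snd hnil) (hmax' _ (c'.getVert_mem_support 1)))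
    (rel_of_fromRel_adj_of_rank_le hf (c'.adj_penultimate hnil).symm
      (hmax' _ (c'.getVert_mem_support _)))

theorem isTree_fromRel_of_rank_succ (hf : ∀ u v, r u v → f v = f u + 1) (v₀ : V)
    (h₀ : ∀ v, f v = 0 → v = v₀) (hpred : ∀ v, 0 < f v → ∃ u, r u v)
    (huniq : ∀ u₁ u₂ v, r u₁ v → r u₂ v → u₁ = u₂) : (fromRel r).IsTree :=
  ⟨connected_fromRel_of_rank_succ hf v₀ h₀ hpred, isAcyclic_fromRel_of_rank_succ hf huniq⟩

end Graded

end SimpleGraph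

section PublicNodes

variable {H : Type*} {par : H → Option H} {depth : H → ℕ} {infosets : Set (Set H)}

lemma depth_eq_of_eqvGen_simRel {h h' : H}
    (hhh : Relation.EqvGen (simRel par depth infosets) h h') : depth h = depth h' := by
  induction hhh with
  | rel _ _ hr => exact hr.1
  | refl => rfl
  | symm _ _ _ ih => exact ih.symm
  | trans _ _ _ _ _ ih₁ ih₂ => exact ih₁.trans ih₂

lemma simRel_of_simRel_children (hdepth : ∀ h g : H, par h = some g → depth h = depth g + 1)
    {h₁ h₂ g₁ g₂ : H} (hs : simRel par depth infosets h₁ h₂)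
    (hg₁ : par h₁ = some g₁) (hg₂ : par h₂ = some g₂) :
    simRel par depth infosets g₁ g₂ := by
  obtain ⟨hd, I, hI, ⟨x₁, hx₁, ha₁⟩, ⟨x₂, hx₂, ha₂⟩⟩ := hs
  refine ⟨?_, I, hI, ⟨x₁, hx₁, ?_⟩, ⟨x₂, hx₂, ?_⟩⟩
  · have := hdepth h₁ g₁ hg₁; have := hdepth h₂ g₂ hg₂; omega
  · exact Relation.ReflTransGen.head (r := fun g h => par h = some g) hg₁ ha₁
  · exact Relation.ReflTransGen.head (r := fun g h => par h = some g) hg₂ ha₂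

lemma eqvGen_simRel_of_eqvGen_simRel_children
    (hdepth : ∀ h g : H, par h = some g → depth h = depth g + 1)
    (hpar : ∀ h : H, 0 < depth h → ∃ g, par h = some g) {h h' : H}
    (hhh : Relation.EqvGen (simRel par depth infosets) h h') {g g' : H}
    (hg : par h = some g) (hg' : par h' = some g') :
    Relation.EqvGen (simRel par depth infosets) g g' := by
  induction hhh generalizing g g' with
  | rel _ _ hr => exact .rel _ _ (simRel_of_simRel_children hdepth hr hg hg')
  | refl => cases hg.symm.trans hg'; exact .refl _
  | symm _ _ _ ih => exact .symm _ _ (ih hg' hg)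
  | trans a b _ hab _ ih₁ ih₂ =>
    have hb : 0 < depth b := by
      have := hdepth a g hg; have := depth_eq_of_eqvGen_simRel hab; omega
    obtain ⟨gb, hgb⟩ := hpar b hb
    exact .trans _ _ _ (ih₁ hg hgb) (ih₂ hgb hg')

end PublicNodes

theorem stmt6_general {H : Type*} (par : H → Option H) (depth : H → ℕ)
    (infosets : Set (Set H)) (root : H)
    (hdroot : depth root = 0)
    (hdepth : ∀ h g : H, par h = some g → depth h = depth g + 1)
    (hpar : ∀ h : H, h ≠ root → (par h).isSome) :
    (publicGraph par depth infosets).IsTree := by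
  set S := pubSetoid par depth infosets
  have hparent : ∀ h : H, 0 < depth h → ∃ g, par h = some g := fun h hh =>
    Option.isSome_iff_exists.mp (hpar h fun hr => by rw [hr, hdroot] at hh; omega)
  refine SimpleGraph.isTree_fromRel_of_rank_succ
    (f := Quotient.lift depth fun _ _ => depth_eq_of_eqvGen_simRel) ?_ (Quotient.mk S root) ?_ ?_ ?_
  · rintro _ _ ⟨h, g, hg, rfl, rfl⟩
    exact hdepth h g hg
  · rintro ⟨h⟩ (hh : depth h = 0)
    obtain rfl : h = root := by
      by_contra hr
      obtain ⟨g, hg⟩ := Option.isSome_iff_exists.mp (hpar h hr)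
      have := hdepth h g hg
      omega
    rfl
  · rintro ⟨h⟩ hh
    obtain ⟨g, hg⟩ := hparent h hh
    exact ⟨_, h, g, hg, rfl, rfl⟩
  · rintro _ _ _ ⟨h, g, hg, rfl, rfl⟩ ⟨h', g', hg', rfl, hh'⟩
    exact Quotient.sound
      (eqvGen_simRel_of_eqvGen_simRel_children hdepth hparent (Quotient.exact hh'.symm) hg hg')

/-- The graph whose vertices are the bags `C = C⁻ ∪ C⁺` (for public
nodes `C⁻`), with an edge between two bags whenever one contains a parent of a node of
the other, is a tree. -/
theorem stmt6 {H : Type*} [Fintype H] (par : H → Option H) (depth : H → ℕ)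
    (infosets : Set (Set H)) (root : H)
    (hthin : ∀ I ∈ infosets, ∀ h ∈ I, ∀ h' ∈ I, depth h = depth h')
    (hroot : par root = none) (hdroot : depth root = 0)
    (hdepth : ∀ h g : H, par h = some g → depth h = depth g + 1)
    (hpar : ∀ h : H, h ≠ root → (par h).isSome) :
    (publicGraph par depth infosets).IsTree :=
  stmt6_general par depth infosets root hdroot hdepth hpar
end

section
/- Consider the single-team game built from a 3-SAT formula φ with m clauses: nature picks a clause uniformly at random, player 1 sees the clause and picks one of its three variables, player 2 sees only the chosen variable (not the clause) and assigns it true or false; the team wins iff the assignment satisfies the clause. Then the team's maximum winning probability equals 1 if and only if φ is satisfiable; moreover if φ is unsatisfiable, every strategy profile loses with probability at least 1/m. -/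
/-- The team's winning probability in the SAT game under pure profile `(s₁, s₂)`:
nature picks one of the `m` clauses uniformly, and a clause is won iff the literal
chosen by player 1 is satisfied by player 2's assignment to its variable. -/
def winProb {V : Type*} (m : ℕ) (clauses : Fin m → Fin 3 → V × Bool)
    (s₁ : Fin m → Fin 3) (s₂ : V → Bool) : ℚ :=
  (Finset.univ.filter
    (fun c : Fin m => s₂ (clauses c (s₁ c)).1 = (clauses c (s₁ c)).2)).card / m

/-- In the single-team game built from a 3-SAT formula with `m ≥ 1`
clauses (nature picks a clause uniformly at random; player 1 sees the clause and picks
one of its three literals; player 2 sees only the chosen variable and assigns it a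
truth value; the team wins iff the chosen literal is satisfied): the maximum winning
probability equals 1 iff the formula is satisfiable, and if it is unsatisfiable then
every strategy profile loses with probability at least `1/m`. -/
theorem stmt14 {V : Type*} (m : ℕ) (hm : 1 ≤ m)
    (clauses : Fin m → Fin 3 → V × Bool) :
    ((∃ (s₁ : Fin m → Fin 3) (s₂ : V → Bool), winProb m clauses s₁ s₂ = 1) ↔
      (∃ A : V → Bool, ∀ c : Fin m, ∃ j : Fin 3,
        A (clauses c j).1 = (clauses c j).2)) ∧
    (¬ (∃ A : V → Bool, ∀ c : Fin m, ∃ j : Fin 3,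
        A (clauses c j).1 = (clauses c j).2) →
      ∀ (s₁ : Fin m → Fin 3) (s₂ : V → Bool),
        (∃ c : Fin m, s₂ (clauses c (s₁ c)).1 ≠ (clauses c (s₁ c)).2) ∧
        1 - winProb m clauses s₁ s₂ ≥ 1 / m) := by
  have hm0 : (0 : ℚ) < m := by exact_mod_cast Nat.lt_of_lt_of_le Nat.zero_lt_one hm
  constructor
  · constructor
    · rintro ⟨s₁, s₂, h⟩
      refine ⟨s₂, fun c => ⟨s₁ c, ?_⟩⟩
      -- winProb = 1 means the filter has card m, hence equals univ
      unfold winProb at h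
      rw [div_eq_one_iff_eq (ne_of_gt hm0)] at h
      have hcard : (Finset.univ.filter
          (fun c : Fin m => s₂ (clauses c (s₁ c)).1 = (clauses c (s₁ c)).2)).card
          = m := by exact_mod_cast h
      have := Finset.eq_univ_of_card
        (Finset.univ.filter
          (fun c : Fin m => s₂ (clauses c (s₁ c)).1 = (clauses c (s₁ c)).2))
        (by rw [hcard, Fintype.card_fin])
      have hc : c ∈ Finset.univ.filter
          (fun c : Fin m => s₂ (clauses c (s₁ c)).1 = (clauses c (s₁ c)).2) := by
        rw [this]; exact Finset.mem_univ c
      exact (Finset.mem_filter.mp hc).2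
    · rintro ⟨A, hA⟩
      refine ⟨fun c => (hA c).choose, A, ?_⟩
      unfold winProb
      have : (Finset.univ.filter
          (fun c : Fin m => A (clauses c ((hA c).choose)).1
            = (clauses c ((hA c).choose)).2)) = Finset.univ := by
        apply Finset.eq_univ_of_forall
        intro c
        exact Finset.mem_filter.mpr ⟨Finset.mem_univ c, (hA c).choose_spec⟩
      rw [this, Finset.card_univ, Fintype.card_fin]
      exact div_self (ne_of_gt hm0)
  · intro hunsat s₁ s₂
    have hex : ∃ c : Fin m, s₂ (clauses c (s₁ c)).1 ≠ (clauses c (s₁ c)).2 := by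
      by_contra h
      push_neg at h
      exact hunsat ⟨s₂, fun c => ⟨s₁ c, h c⟩⟩
    refine ⟨hex, ?_⟩
    obtain ⟨c₀, hc₀⟩ := hex
    have hcard : (Finset.univ.filter
        (fun c : Fin m => s₂ (clauses c (s₁ c)).1 = (clauses c (s₁ c)).2)).card ≤ m - 1 := by
      have hsub : (Finset.univ.filter
          (fun c : Fin m => s₂ (clauses c (s₁ c)).1 = (clauses c (s₁ c)).2))
          ⊆ Finset.univ.erase c₀ := by
        intro x hx
        rcases Finset.mem_filter.mp hx with ⟨_, hx2⟩
        refine Finset.mem_erase.mpr ⟨?_, Finset.mem_univ x⟩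
        rintro rfl; exact hc₀ hx2
      calc _ ≤ (Finset.univ.erase c₀).card := Finset.card_le_card hsub
        _ = m - 1 := by
            rw [Finset.card_erase_of_mem (Finset.mem_univ c₀), Finset.card_univ,
              Fintype.card_fin]
    unfold winProb
    rw [ge_iff_le, div_le_iff₀ hm0, sub_mul, one_mul, div_mul_cancel₀ _ (ne_of_gt hm0),
      le_sub_comm]
    have : ((Finset.univ.filter
        (fun c : Fin m => s₂ (clauses c (s₁ c)).1 = (clauses c (s₁ c)).2)).card : ℚ)
        ≤ ((m - 1 : ℕ) : ℚ) := by exact_mod_cast hcard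
    calc ((Finset.univ.filter
        (fun c : Fin m => s₂ (clauses c (s₁ c)).1 = (clauses c (s₁ c)).2)).card : ℚ)
        ≤ ((m - 1 : ℕ) : ℚ) := this
      _ = (m : ℚ) - 1 := by
          rw [Nat.cast_sub hm, Nat.cast_one]
end
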